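/- Density of the subTuring degrees: if g <subT f, then there exists a partial function h with g <subT h <subT f. Moreover h can be chosen as (f↾A) ⊕ g for a suitable set A, and h is then a strong quasiminimal cover of g: every total function t with t ≤subT h satisfies t ≤subT g. -/

import Mathlib

open Classical

noncomputable section

/-- `as` is a valid answer history for the sequential oracle computation of `Φ`
with oracle `g` on input `n`: at each round `k`, the machine outputs a query
`(false, q)` with `q` in the domain of `g`, answered by `g q = as[k]`. -/
def ValidHist (Φ : List ℕ →. Bool × ℕ) (g : ℕ →. ℕ) (n : ℕ) (as : List ℕ) : Prop :=
  ∀ (k : ℕ) (hk : k < as.length), ∃ q : ℕ,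
    (false, q) ∈ Φ (n :: as.take k) ∧ (as[k]'hk) ∈ g q

/-- The sequential oracle computation `Φ[g](n)` halts with output `m`. -/
def HaltsTo (Φ : List ℕ →. Bool × ℕ) (g : ℕ →. ℕ) (n m : ℕ) : Prop :=
  ∃ as : List ℕ, ValidHist Φ g n as ∧ (true, m) ∈ Φ (n :: as)

/-- subTuring reducibility: `f ⊆ Φ[g]` for some partial computable `Φ`. -/
def SubTuringLE (f g : ℕ →. ℕ) : Prop :=
  ∃ Φ : List ℕ →. Bool × ℕ, Partrec Φ ∧ ∀ n m, m ∈ f n → HaltsTo Φ g n m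

/-- subTuring equivalence. -/
def SubTuringEquiv (f g : ℕ →. ℕ) : Prop := SubTuringLE f g ∧ SubTuringLE g f

/-- The join `f ⊕ g`: `(f ⊕ g)(2n) = f(n)`, `(f ⊕ g)(2n+1) = g(n)`. -/
def PJoin (f g : ℕ →. ℕ) : ℕ →. ℕ := fun n =>
  if n % 2 = 0 then f (n / 2) else g (n / 2)

/-- Restriction of a partial function to a set: `f↾A`. -/
def restrictTo (f : ℕ →. ℕ) (A : Set ℕ) : ℕ →. ℕ := fun n =>
  if n ∈ A then f n else Part.none

/-!
The set `A` is built by finite forcing: a condition `(P, N)` of disjoint finite sets demands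
`P ⊆ A` and `A ∩ N = ∅`, and for each partial computable `Φ` some condition forces three
requirements. If `Φ` relative to `g` computed `(f↾A) ⊕ g` at every `2n` with `n ∉ N`, then `f`
would be `≤subT g` up to a finite patch, so some such `n` can be put into `A`. If no enlargement of
`N` stops `Φ` relative to `(f↾Nᶜ) ⊕ g` from reducing `f` (or from being total), the computations
halt robustly; by determinism they then query `f` only inside `P`, so they can be simulated from
`g` with a finite table, giving `f ≤subT g` (resp. `t ≤subT g`).
-/

def Reduces (Φ : List ℕ →. Bool × ℕ) (f g : ℕ →. ℕ) : Prop :=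
  ∀ n m, m ∈ f n → HaltsTo Φ g n m

section OracleComputation

variable {Φ : List ℕ →. Bool × ℕ} {o o' : ℕ →. ℕ} {n m : ℕ} {as : List ℕ}

theorem validHist_nil : ValidHist Φ o n [] := fun _ hk => absurd hk (Nat.not_lt_zero _)

theorem validHist_append_singleton {a : ℕ} :
    ValidHist Φ o n (as ++ [a]) ↔
      ValidHist Φ o n as ∧ ∃ q, (false, q) ∈ Φ (n :: as) ∧ a ∈ o q := by
  constructor
  · intro h
    refine ⟨fun k hk => ?_, ?_⟩
    · obtain ⟨q, hq, ha⟩ := h k (by simp; omega)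
      rw [List.take_append_of_le_length hk.le] at hq
      rw [List.getElem_append_left hk] at ha
      exact ⟨q, hq, ha⟩
    · obtain ⟨q, hq, ha⟩ := h as.length (by simp)
      exact ⟨q, by simpa using hq, by simpa using ha⟩
  · rintro ⟨h, q, hq, ha⟩ k hk
    rcases (show k < as.length ∨ k = as.length by simp at hk; omega) with hk | rfl
    · obtain ⟨q', hq', ha'⟩ := h k hk
      refine ⟨q', ?_, ?_⟩
      · rwa [List.take_append_of_le_length hk.le]
      · rwa [List.getElem_append_left hk]
    · exact ⟨q, by simpa using hq, by simpa using ha⟩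

theorem ValidHist.mono (hle : ∀ q, ∀ a ∈ o q, a ∈ o' q) (h : ValidHist Φ o n as) :
    ValidHist Φ o' n as := fun k hk =>
  let ⟨q, hq, ha⟩ := h k hk
  ⟨q, hq, hle q _ ha⟩

theorem HaltsTo.mono (hle : ∀ q, ∀ a ∈ o q, a ∈ o' q) : HaltsTo Φ o n m → HaltsTo Φ o' n m
  | ⟨as, hv, hm⟩ => ⟨as, hv.mono hle, hm⟩

theorem HaltsTo.of_forall_cons_eq {Ψ : List ℕ →. Bool × ℕ} {n' : ℕ}
    (hΨ : ∀ as, Ψ (n :: as) = Φ (n' :: as)) : HaltsTo Φ o n' m → HaltsTo Ψ o n m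
  | ⟨as, hv, hm⟩ => ⟨as, fun k hk => by rw [hΨ]; exact hv k hk, by rw [hΨ]; exact hm⟩

theorem ValidHist.isPrefix {as' : List ℕ} (h : ValidHist Φ o n as) (h' : ValidHist Φ o n as')
    (hlen : as.length ≤ as'.length) : as <+: as' := by
  induction as using List.reverseRecOn with
  | nil => exact List.nil_prefix
  | append_singleton as a ih =>
    obtain ⟨hv, q, hq, ha⟩ := validHist_append_singleton.1 h
    have hlt : as.length < as'.length := by simp at hlen; omega
    have htake := List.prefix_iff_eq_take.1 (ih hv hlt.le)
    obtain ⟨q', hq', ha'⟩ := h' as.length hlt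
    rw [← htake] at hq'
    obtain rfl : q = q' := (Prod.ext_iff.1 (Part.mem_unique hq hq')).2
    obtain rfl : a = as'[as.length] := Part.mem_unique ha ha'
    rw [List.prefix_iff_eq_take, List.length_append, List.length_singleton, List.take_add_one,
      ← htake, List.getElem?_eq_getElem hlt, Option.toList_some]

theorem ValidHist.eq_of_halts {as' : List ℕ} {m' : ℕ} (h : ValidHist Φ o n as)
    (hm : (true, m) ∈ Φ (n :: as)) (h' : ValidHist Φ o n as') (hm' : (true, m') ∈ Φ (n :: as')) :
    as = as' := by
  wlog hlen : as.length ≤ as'.length generalizing as as' m m'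
  · exact (this h' hm' h hm (by omega)).symm
  have hpre := h.isPrefix h' hlen
  refine hpre.eq_of_length (le_antisymm hlen (not_lt.1 fun hlt => ?_))
  obtain ⟨q, hq, -⟩ := h' as.length hlt
  rw [← List.prefix_iff_eq_take.1 hpre] at hq
  exact Bool.false_ne_true (Prod.ext_iff.1 (Part.mem_unique hq hm)).1

theorem ValidHist.of_haltsTo_of_le {m' : ℕ} (hle : ∀ q, ∀ a ∈ o' q, a ∈ o q)
    (h : ValidHist Φ o n as) (hm : (true, m) ∈ Φ (n :: as)) (h' : HaltsTo Φ o' n m') :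
    ValidHist Φ o' n as := by
  obtain ⟨as', hv', hm'⟩ := h'
  rwa [h.eq_of_halts hm (hv'.mono hle) hm']

end OracleComputation

section JoinRestrict

variable {f g : ℕ →. ℕ} {A B : Set ℕ}

@[simp]
theorem pJoin_two_mul (u g : ℕ →. ℕ) (p : ℕ) : PJoin u g (2 * p) = u p := by
  simp [PJoin]

@[simp]
theorem pJoin_two_mul_add_one (u g : ℕ →. ℕ) (p : ℕ) : PJoin u g (2 * p + 1) = g p := by
  simp [PJoin, Nat.add_mod, Nat.add_div]

@[simp]
theorem mem_restrictTo {p a : ℕ} : a ∈ restrictTo f A p ↔ p ∈ A ∧ a ∈ f p := by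
  unfold restrictTo
  split_ifs with hp <;> simp [hp]

theorem mem_pJoin_restrictTo_of_subset (hAB : A ⊆ B) :
    ∀ q, ∀ a ∈ PJoin (restrictTo f A) g q, a ∈ PJoin (restrictTo f B) g q := by
  intro q a ha
  obtain ⟨p, rfl | rfl⟩ := Nat.even_or_odd' q
  · simp only [pJoin_two_mul, mem_restrictTo] at ha ⊢
    exact ⟨hAB ha.1, ha.2⟩
  · simpa using ha

end JoinRestrict

section Machines

variable {f f' g h o o' : ℕ →. ℕ}

/-- On `[n]` it asks `n`; on `[n, a]` it halts with output `a`. -/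
def identityMachine : List ℕ →. Bool × ℕ := fun l => Part.some (l.length == 2, l.reverse.headI)

theorem SubTuringLE.refl (f : ℕ →. ℕ) : SubTuringLE f f := by
  refine ⟨identityMachine, ?_, fun n m hm => ⟨[m], ?_, by simp [identityMachine]⟩⟩
  · exact ((Primrec.beq.comp Primrec.list_length (Primrec.const 2)).pair
      (Primrec.list_headI.comp Primrec.list_reverse)).to_comp.partrec
  · exact validHist_append_singleton (as := []) |>.2
      ⟨validHist_nil, n, by simp [identityMachine], hm⟩

theorem subTuringLE_of_haltsTo_comp {Φ : List ℕ →. Bool × ℕ} {r : ℕ → ℕ} (hΦ : Partrec Φ)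
    (hr : Computable r) (hΦf : ∀ n m, m ∈ f n → HaltsTo Φ g (r n) m) : SubTuringLE f g :=
  ⟨fun l => Φ (r l.headI :: l.tail),
    hΦ.comp (Computable.list_cons.comp (hr.comp Primrec.list_headI.to_comp)
      Primrec.list_tail.to_comp),
    fun n m hm => (hΦf n m hm).of_forall_cons_eq fun _ => rfl⟩

theorem SubTuringLE.pJoin (hf : SubTuringLE f h) (hf' : SubTuringLE f' h) :
    SubTuringLE (PJoin f f') h := by
  obtain ⟨Φ, hΦ, hΦf⟩ := hf
  obtain ⟨Ψ, hΨ, hΨf'⟩ := hf'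
  have hhalf : Computable fun l : List ℕ => l.headI / 2 :: l.tail :=
    (Primrec.list_cons.comp (Primrec.nat_div.comp Primrec.list_headI (Primrec.const 2))
      Primrec.list_tail).to_comp
  refine ⟨fun l => bif l.headI % 2 == 0 then Φ (l.headI / 2 :: l.tail)
    else Ψ (l.headI / 2 :: l.tail), ?_, fun k m hm => ?_⟩
  · exact Partrec.cond (Primrec.beq.comp (Primrec.nat_mod.comp Primrec.list_headI
      (Primrec.const 2)) (Primrec.const 0)).to_comp (hΦ.comp hhalf) (hΨ.comp hhalf)
  · obtain ⟨p, rfl | rfl⟩ := Nat.even_or_odd' k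
    · exact (hΦf p m (by simpa using hm)).of_forall_cons_eq fun _ => by simp
    · refine (hΨf' p m (by simpa using hm)).of_forall_cons_eq fun _ => ?_
      simp [Nat.add_mod, Nat.add_div]

/-- Runs `Φ`, answering a query `q` from `τ q` when that is defined and otherwise by asking `r q`.
The state is the list of answers received but not yet used, and the simulated history of `Φ`
(which starts with the input); it is replayed from scratch at every stage. -/
def forwardNext (τ : ℕ → Option ℕ) (r : ℕ → ℕ) (s : List ℕ × List ℕ) (out : Bool × ℕ) :
    (Bool × ℕ) ⊕ (List ℕ × List ℕ) :=
  bif out.1 then .inl out else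
    (τ out.2).elim (s.1.head?.elim (.inl (false, r out.2)) fun c => .inr (s.1.tail, s.2 ++ [c]))
      fun a => .inr (s.1, s.2 ++ [a])

def forwardMachine (τ : ℕ → Option ℕ) (r : ℕ → ℕ) (Φ : List ℕ →. Bool × ℕ) :
    List ℕ →. Bool × ℕ := fun l =>
  PFun.fix (fun s => (Φ s.2).map (forwardNext τ r s)) (l.tail, [l.headI])

theorem computable₂_forwardNext {τ : ℕ → Option ℕ} {r : ℕ → ℕ} (hτ : Computable τ)
    (hr : Computable r) : Computable₂ (forwardNext τ r) := by
  open Computable in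
  have hs : Computable fun p : (List ℕ × List ℕ) × (Bool × ℕ) => p.1 := fst
  have hq : Computable fun p : (List ℕ × List ℕ) × (Bool × ℕ) => p.2.2 := snd.comp snd
  have hforward : Computable fun p : (List ℕ × List ℕ) × (Bool × ℕ) =>
      (p.1.1.head?.elim (.inl (false, r p.2.2)) fun c => .inr (p.1.1.tail, p.1.2 ++ [c]) :
        (Bool × ℕ) ⊕ (List ℕ × List ℕ)) :=
    option_casesOn (Primrec.list_head?.to_comp.comp (fst.comp hs))
      (sumInl.comp ((const false).pair (hr.comp hq)))
      (sumInr.comp ((Primrec.list_tail.to_comp.comp (fst.comp (hs.comp fst))).pair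
        (list_concat.comp (snd.comp (hs.comp fst)) snd))).to₂ |>.of_eq
      fun p => by cases p.1.1.head? <;> rfl
  have hquery : Computable fun p : (List ℕ × List ℕ) × (Bool × ℕ) =>
      ((τ p.2.2).elim (p.1.1.head?.elim (.inl (false, r p.2.2))
        fun c => .inr (p.1.1.tail, p.1.2 ++ [c])) fun a => .inr (p.1.1, p.1.2 ++ [a]) :
        (Bool × ℕ) ⊕ (List ℕ × List ℕ)) :=
    option_casesOn (hτ.comp hq) hforward
      (sumInr.comp ((fst.comp (hs.comp fst)).pair
        (list_concat.comp (snd.comp (hs.comp fst)) snd))).to₂ |>.of_eq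
      fun p => by cases τ p.2.2 <;> rfl
  exact (cond (fst.comp snd) (sumInl.comp snd) hquery).to₂

theorem partrec_forwardMachine {τ : ℕ → Option ℕ} {r : ℕ → ℕ} {Φ : List ℕ →. Bool × ℕ}
    (hτ : Computable τ) (hr : Computable r) (hΦ : Partrec Φ) :
    Partrec (forwardMachine τ r Φ) := by
  have hnext := computable₂_forwardNext hτ hr
  exact (Partrec.fix ((hΦ.comp Computable.snd).map hnext)).comp
    (Primrec.list_tail.pair (Primrec.list_cons.comp Primrec.list_headI
      (Primrec.const []))).to_comp

theorem haltsTo_forwardMachine {Φ : List ℕ →. Bool × ℕ} {τ : ℕ → Option ℕ} {r : ℕ → ℕ} {n m : ℕ}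
    (hfwd : ∀ q, ∀ a ∈ o q, τ q = some a ∨ τ q = none ∧ a ∈ o' (r q))
    (h : HaltsTo Φ o n m) : HaltsTo (forwardMachine τ r Φ) o' n m := by
  set F := PFun.fix fun s : List ℕ × List ℕ => (Φ s.2).map (forwardNext τ r s)
  have step : ∀ {s out}, out ∈ Φ s.2 → forwardNext τ r s out ∈ (Φ s.2).map (forwardNext τ r s) :=
    Part.mem_map _
  have replay : ∀ as, ValidHist Φ o n as → ∃ bs, ValidHist (forwardMachine τ r Φ) o' n bs ∧
      ∀ cs, F (bs ++ cs, [n]) = F (cs, n :: as) := by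
    intro as
    induction as using List.reverseRecOn with
    | nil => exact fun _ => ⟨[], validHist_nil, fun _ => rfl⟩
    | append_singleton as a ih =>
      intro hv
      obtain ⟨hv, q, hq, ha⟩ := validHist_append_singleton.1 hv
      obtain ⟨bs, hbs, hF⟩ := ih hv
      rcases hfwd q a ha with hτ | ⟨hτ, ha'⟩
      · refine ⟨bs, hbs, fun cs => (hF cs).trans (PFun.fix_fwd_eq ?_)⟩
        simpa [forwardNext, hτ] using step (s := (cs, n :: as)) hq
      · refine ⟨bs ++ [a], validHist_append_singleton.2 ⟨hbs, r q, ?_, ha'⟩, fun cs => ?_⟩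
        · show (false, r q) ∈ F (bs, [n])
          rw [← List.append_nil bs, hF]
          exact PFun.fix_stop (by simpa [forwardNext, hτ] using step (s := ([], n :: as)) hq)
        · rw [List.append_assoc, List.singleton_append, hF]
          exact PFun.fix_fwd_eq (by simpa [forwardNext, hτ] using step (s := (a :: cs, n :: as)) hq)
  obtain ⟨as, hv, hm⟩ := h
  obtain ⟨bs, hbs, hF⟩ := replay as hv
  refine ⟨bs, hbs, ?_⟩
  show (true, m) ∈ F (bs, [n])
  rw [← List.append_nil bs, hF]
  exact PFun.fix_stop (by simpa [forwardNext] using step (s := ([], n :: as)) hm)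

theorem SubTuringLE.trans_forward {τ : ℕ → Option ℕ} {r : ℕ → ℕ} (hτ : Computable τ)
    (hr : Computable r) (hfwd : ∀ q, ∀ a ∈ o q, τ q = some a ∨ τ q = none ∧ a ∈ o' (r q))
    (hf : SubTuringLE f o) : SubTuringLE f o' :=
  let ⟨Φ, hΦ, hΦf⟩ := hf
  ⟨forwardMachine τ r Φ, partrec_forwardMachine hτ hr hΦ,
    fun n m hm => haltsTo_forwardMachine hfwd (hΦf n m hm)⟩

end Machines

theorem computable_of_forall_notMem_eq {σ : Type*} [Primcodable σ] {F : ℕ → σ} (P : Finset ℕ)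
    (d : σ) (hF : ∀ p ∉ P, F p = d) : Computable F := by
  set L := (List.range (P.sup id + 1)).map F
  refine ((Primrec.option_getD.comp (Primrec.list_getElem?₁ L) (Primrec.const d)).to_comp).of_eq
    fun p => ?_
  by_cases hp : p < P.sup id + 1
  · simp [L, hp]
  · have hpP : p ∉ P := fun h => hp (Nat.lt_succ_of_le (Finset.le_sup (f := id) h))
    simp [L, hp, hF p hpP]

def finsetTable (f : ℕ →. ℕ) (P : Finset ℕ) (p : ℕ) : Option ℕ :=
  if p ∈ P then (f p).toOption else none

theorem computable_finsetTable (f : ℕ →. ℕ) (P : Finset ℕ) : Computable (finsetTable f P) :=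
  computable_of_forall_notMem_eq P none fun p hp => by simp [finsetTable, hp]

theorem finsetTable_eq_some_iff {f : ℕ →. ℕ} {P : Finset ℕ} {p a : ℕ} :
    finsetTable f P p = some a ↔ a ∈ restrictTo f ↑P p := by
  by_cases hp : p ∈ P <;> simp [finsetTable, hp, Part.toOption_eq_some_iff]

section FiniteRestriction

variable {f g h : ℕ →. ℕ}

theorem subTuringLE_pJoin_right (u g : ℕ →. ℕ) : SubTuringLE g (PJoin u g) :=
  (SubTuringLE.refl g).trans_forward (τ := fun _ => none) (r := fun q => 2 * q + 1)
    (Computable.const none) (Primrec.succ.comp (Primrec.nat_mul.comp (Primrec.const 2)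
      Primrec.id)).to_comp fun _ _ ha => .inr ⟨rfl, by simpa using ha⟩

theorem subTuringLE_restrictTo (f : ℕ →. ℕ) (A : Set ℕ) : SubTuringLE (restrictTo f A) f :=
  (SubTuringLE.refl _).trans_forward (τ := fun _ => none) (r := id) (Computable.const none)
    Computable.id fun _ _ ha => .inr ⟨rfl, (mem_restrictTo.1 ha).2⟩

theorem subTuringLE_restrictTo_finset (f : ℕ →. ℕ) (P : Finset ℕ) (g : ℕ →. ℕ) :
    SubTuringLE (restrictTo f ↑P) g :=
  (SubTuringLE.refl _).trans_forward (r := id) (computable_finsetTable f P) Computable.id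
    fun _ _ ha => .inl (finsetTable_eq_some_iff.2 ha)

theorem SubTuringLE.of_le_pJoin_restrictTo_finset (P : Finset ℕ)
    (hh : SubTuringLE h (PJoin (restrictTo f ↑P) g)) : SubTuringLE h g := by
  refine hh.trans_forward (τ := fun q => bif q % 2 == 0 then finsetTable f P (q / 2) else none)
    (r := (· / 2)) ?_ (Primrec.nat_div.comp Primrec.id (Primrec.const 2)).to_comp ?_
  · exact Computable.cond (Primrec.beq.comp (Primrec.nat_mod.comp Primrec.id (Primrec.const 2))
      (Primrec.const 0)).to_comp ((computable_finsetTable f P).comp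
        (Primrec.nat_div.comp Primrec.id (Primrec.const 2)).to_comp) (Computable.const none)
  · intro q a ha
    obtain ⟨p, rfl | rfl⟩ := Nat.even_or_odd' q
    · exact .inl (by simpa [finsetTable_eq_some_iff] using ha)
    · exact .inr ⟨by simp [Nat.add_mod], by simpa [Nat.add_div] using ha⟩

theorem SubTuringLE.of_restrictTo_compl (N : Finset ℕ) (hN : SubTuringLE (restrictTo f (↑N)ᶜ) g) :
    SubTuringLE f g := by
  obtain ⟨Ψ, hΨ, hΨf⟩ := (subTuringLE_restrictTo_finset f N g).pJoin hN
  have hmem : Computable fun n => decide (n ∈ N) :=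
    computable_of_forall_notMem_eq N false fun n hn => by simp [hn]
  refine subTuringLE_of_haltsTo_comp hΨ
    (r := fun n => bif decide (n ∈ N) then 2 * n else 2 * n + 1) ?_ fun n m hm => hΨf _ m ?_
  · have h2 : Computable fun n : ℕ => 2 * n :=
      (Primrec.nat_mul.comp (Primrec.const 2) Primrec.id).to_comp
    exact Computable.cond hmem h2 (Primrec.succ.to_comp.comp h2)
  · by_cases hn : n ∈ N <;> simp [hn, hm]

end FiniteRestriction

/-- With one point outside `P` removed from the oracle, `Φ` must follow the same (unique)
halting history, which therefore never asks about that point. -/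
theorem HaltsTo.restrictTo_of_forall_insert {Φ : List ℕ →. Bool × ℕ} {f g : ℕ →. ℕ}
    {P N : Set ℕ} {n m : ℕ} (h : HaltsTo Φ (PJoin (restrictTo f Nᶜ) g) n m)
    (hins : ∀ p ∉ P, p ∉ N → ∃ m', HaltsTo Φ (PJoin (restrictTo f (insert p N)ᶜ) g) n m') :
    HaltsTo Φ (PJoin (restrictTo f P) g) n m := by
  obtain ⟨as, hv, hm⟩ := h
  refine ⟨as, fun k hk => ?_, hm⟩
  obtain ⟨q, hq, ha⟩ := hv k hk
  refine ⟨q, hq, ?_⟩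
  obtain ⟨p, rfl | rfl⟩ := Nat.even_or_odd' q
  · simp only [pJoin_two_mul, mem_restrictTo, Set.mem_compl_iff] at ha ⊢
    refine ⟨by_contra fun hp => ?_, ha.2⟩
    obtain ⟨m', hm'⟩ := hins p hp ha.1
    have hv' := hv.of_haltsTo_of_le (mem_pJoin_restrictTo_of_subset
      (Set.compl_subset_compl.2 (Set.subset_insert p N))) hm hm'
    obtain ⟨q', hq', ha'⟩ := hv' k hk
    obtain rfl : q' = 2 * p := (Prod.ext_iff.1 (Part.mem_unique hq' hq)).2
    simp at ha'
  · simpa using ha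

abbrev Condition (α : Type*) := {c : Finset α × Finset α // Disjoint c.1 c.2}

namespace Condition

variable {α : Type*}

def Admits (c : Condition α) (A : Set α) : Prop := ↑c.1.1 ⊆ A ∧ Disjoint A ↑c.1.2

def Forces (c : Condition α) (R : Set α → Prop) : Prop := ∀ A, c.Admits A → R A

theorem Forces.mono {c d : Condition α} {R : Set α → Prop} (hcd : c ≤ d) (hc : c.Forces R) :
    d.Forces R := fun A hA =>
  hc A ⟨(Finset.coe_subset.2 hcd.1).trans hA.1, hA.2.mono_right (Finset.coe_subset.2 hcd.2)⟩

theorem exists_forall_of_forall_exists_forces {ι : Type*} [Countable ι] (R : ι → Set α → Prop)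
    (hR : ∀ i (c : Condition α), ∃ d, c ≤ d ∧ d.Forces (R i)) : ∃ A, ∀ i, R i A := by
  have := Encodable.ofCountable ι
  let 𝒟 : ι → Order.Cofinal (Condition α) := fun i =>
    ⟨{d | d.Forces (R i)}, fun c => let ⟨d, hcd, hd⟩ := hR i c; ⟨d, hd, hcd⟩⟩
  let I := Order.idealOfCofinals ⟨(∅, ∅), disjoint_bot_left⟩ 𝒟
  refine ⟨⋃ c ∈ I, ↑c.1.1, fun i => ?_⟩
  obtain ⟨d, hd, hdI⟩ := Order.cofinal_meets_idealOfCofinals _ 𝒟 i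
  refine hd _ ⟨Set.subset_biUnion_of_mem (u := fun c : Condition α => (↑c.1.1 : Set α)) hdI,
    Set.disjoint_iUnion₂_left.2 fun c hcI => ?_⟩
  obtain ⟨e, -, hce, hde⟩ := I.directed c hcI d hdI
  exact (Finset.disjoint_coe.2 e.2).mono (Finset.coe_subset.2 hce.1) (Finset.coe_subset.2 hde.2)

end Condition

theorem countable_setOf_partrec {α σ : Type*} [Primcodable α] [Primcodable σ] :
    {Φ : α →. σ | Partrec Φ}.Countable := by
  refine Set.MapsTo.countable_of_injOn (t := Set.range Nat.Partrec.Code.eval)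
    (f := fun (Φ : α →. σ) n => Part.bind (Encodable.decode (α := α) n : Part α)
      fun a => (Φ a).map Encodable.encode)
    (fun Φ hΦ => Nat.Partrec.Code.exists_code.1 hΦ) (fun Φ _ Ψ _ hΦΨ => ?_) (Set.countable_range _)
  funext a
  have hencode := congrFun hΦΨ (Encodable.encode a)
  simp only [Encodable.encodek, Part.coe_some, Part.bind_some] at hencode
  ext b
  simpa using congrArg (Encodable.encode b ∈ ·) hencode

section Requirements

variable {f g : ℕ →. ℕ} {Φ : List ℕ →. Bool × ℕ}

def Requirements (f g : ℕ →. ℕ) (Φ : List ℕ →. Bool × ℕ) (A : Set ℕ) : Prop :=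
  ¬ Reduces Φ (PJoin (restrictTo f A) g) g ∧ ¬ Reduces Φ f (PJoin (restrictTo f A) g) ∧
    ∀ t : ℕ → ℕ, Reduces Φ t (PJoin (restrictTo f A) g) → SubTuringLE t g

theorem exists_forces_not_reduces_pJoin (hnle : ¬ SubTuringLE f g) (hΦ : Partrec Φ)
    (c : Condition ℕ) :
    ∃ d, c ≤ d ∧ d.Forces fun A => ¬ Reduces Φ (PJoin (restrictTo f A) g) g := by
  by_cases H : ∃ n ∉ c.1.2, ∃ m ∈ f n, ¬ HaltsTo Φ g (2 * n) m
  · obtain ⟨n, hnN, m, hm, hnot⟩ := H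
    refine ⟨⟨(insert n c.1.1, c.1.2), Finset.disjoint_insert_left.2 ⟨hnN, c.2⟩⟩,
      ⟨Finset.subset_insert _ _, le_rfl⟩, fun A hA hred => hnot (hred _ _ ?_)⟩
    simpa using ⟨hA.1 (by simp), hm⟩
  · push Not at H
    refine absurd (SubTuringLE.of_restrictTo_compl c.1.2 (subTuringLE_of_haltsTo_comp hΦ
      (Primrec.nat_mul.comp (Primrec.const 2) Primrec.id).to_comp fun n m hm => ?_)) hnle
    simp only [mem_restrictTo, Set.mem_compl_iff, Finset.mem_coe] at hm
    exact H n hm.1 m hm.2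

theorem Condition.haltsTo_pos_of_forall_le {c : Condition ℕ} {n m : ℕ}
    (hext : ∀ d : Condition ℕ, c ≤ d → ∃ m', HaltsTo Φ (PJoin (restrictTo f (↑d.1.2)ᶜ) g) n m')
    (hc : HaltsTo Φ (PJoin (restrictTo f (↑c.1.2)ᶜ) g) n m) :
    HaltsTo Φ (PJoin (restrictTo f ↑c.1.1) g) n m :=
  hc.restrictTo_of_forall_insert fun p hpP hpN => by
    simpa using hext ⟨(c.1.1, insert p c.1.2), Finset.disjoint_insert_right.2 ⟨hpP, c.2⟩⟩
      ⟨le_rfl, Finset.subset_insert _ _⟩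

theorem Condition.Admits.haltsTo {c : Condition ℕ} {A : Set ℕ} {n m : ℕ} (hA : c.Admits A)
    (h : HaltsTo Φ (PJoin (restrictTo f A) g) n m) :
    HaltsTo Φ (PJoin (restrictTo f (↑c.1.2)ᶜ) g) n m :=
  h.mono (mem_pJoin_restrictTo_of_subset (Set.subset_compl_iff_disjoint_right.2 hA.2))

theorem exists_forces_not_reduces_right (hnle : ¬ SubTuringLE f g) (hΦ : Partrec Φ)
    (c : Condition ℕ) :
    ∃ d, c ≤ d ∧ d.Forces fun A => ¬ Reduces Φ f (PJoin (restrictTo f A) g) := by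
  by_cases H : ∃ d : Condition ℕ, c ≤ d ∧ ¬ Reduces Φ f (PJoin (restrictTo f (↑d.1.2)ᶜ) g)
  · obtain ⟨d, hcd, hnot⟩ := H
    exact ⟨d, hcd, fun A hA hred => hnot fun n m hm => hA.haltsTo (hred n m hm)⟩
  · push Not at H
    refine absurd (SubTuringLE.of_le_pJoin_restrictTo_finset (f := f) c.1.1 ⟨Φ, hΦ, fun n m hm => ?_⟩) hnle
    exact Condition.haltsTo_pos_of_forall_le (fun d hd => ⟨m, H d hd n m hm⟩) (H c le_rfl n m hm)

theorem exists_forces_total_reduces (hΦ : Partrec Φ) (c : Condition ℕ) :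
    ∃ d, c ≤ d ∧ d.Forces fun A =>
      ∀ t : ℕ → ℕ, Reduces Φ t (PJoin (restrictTo f A) g) → SubTuringLE t g := by
  by_cases H : ∃ d : Condition ℕ, c ≤ d ∧
      ∃ n, ∀ m, ¬ HaltsTo Φ (PJoin (restrictTo f (↑d.1.2)ᶜ) g) n m
  · obtain ⟨d, hcd, n, hnot⟩ := H
    exact ⟨d, hcd, fun A hA t ht => absurd (hA.haltsTo (ht n (t n) (by simp))) (hnot (t n))⟩
  · push Not at H
    refine ⟨c, le_rfl, fun A hA t ht => ?_⟩
    refine SubTuringLE.of_le_pJoin_restrictTo_finset (f := f) c.1.1 ⟨Φ, hΦ, fun n m hm => ?_⟩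
    obtain rfl : m = t n := by simpa using hm
    exact Condition.haltsTo_pos_of_forall_le (fun d hd => H d hd n) (hA.haltsTo (ht n _ hm))

theorem exists_forces_requirements (hnle : ¬ SubTuringLE f g) (hΦ : Partrec Φ)
    (c : Condition ℕ) : ∃ d, c ≤ d ∧ d.Forces (Requirements f g Φ) := by
  obtain ⟨d₁, hcd₁, h₁⟩ := exists_forces_not_reduces_pJoin hnle hΦ c
  obtain ⟨d₂, hd₁₂, h₂⟩ := exists_forces_not_reduces_right hnle hΦ d₁
  obtain ⟨d₃, hd₂₃, h₃⟩ := exists_forces_total_reduces hΦ d₂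
  refine ⟨d₃, hcd₁.trans (hd₁₂.trans hd₂₃), fun A hA => ⟨?_, ?_, h₃ A hA⟩⟩
  · exact (h₁.mono (hd₁₂.trans hd₂₃)) A hA
  · exact (h₂.mono hd₂₃) A hA

end Requirements

theorem subTuring_dense (f g : ℕ →. ℕ)
    (hle : SubTuringLE g f) (hnle : ¬ SubTuringLE f g) :
    ∃ A : Set ℕ,
      (SubTuringLE g (PJoin (restrictTo f A) g) ∧
        ¬ SubTuringLE (PJoin (restrictTo f A) g) g) ∧
      (SubTuringLE (PJoin (restrictTo f A) g) f ∧
        ¬ SubTuringLE f (PJoin (restrictTo f A) g)) ∧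
      ∀ t : ℕ → ℕ, SubTuringLE (t : ℕ →. ℕ) (PJoin (restrictTo f A) g) →
        SubTuringLE (t : ℕ →. ℕ) g := by
  have := (countable_setOf_partrec (α := List ℕ) (σ := Bool × ℕ)).to_subtype
  obtain ⟨A, hA⟩ := Condition.exists_forall_of_forall_exists_forces
    (fun Φ : {Φ : List ℕ →. Bool × ℕ | Partrec Φ} => Requirements f g Φ)
    fun Φ => exists_forces_requirements hnle Φ.2
  refine ⟨A, ⟨subTuringLE_pJoin_right _ g, ?_⟩, ⟨(subTuringLE_restrictTo f A).pJoin hle, ?_⟩, ?_⟩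
  · rintro ⟨Φ, hΦ, hred⟩
    exact (hA ⟨Φ, hΦ⟩).1 hred
  · rintro ⟨Φ, hΦ, hred⟩
    exact (hA ⟨Φ, hΦ⟩).2.1 hred
  · rintro t ⟨Φ, hΦ, hred⟩
    exact (hA ⟨Φ, hΦ⟩).2.2 t hred
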